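/- Let k ≥ 1 and let 0 = i_0 ≤ i_1 ≤ i_2 ≤ … ≤ i_{k−1} be natural numbers. Define k×k matrices M and N over ℂ[x,y] by: M_{p,q} = x^{k−1−(q−p)} y^{i_{q−1} − i_{p−1}} for 1 ≤ p ≤ q ≤ k and M_{p,q} = 0 for p > q; N_{p,p} = x for 1 ≤ p ≤ k, N_{p,p+1} = −y^{i_p − i_{p−1}} for 1 ≤ p ≤ k−1, and N_{p,q} = 0 otherwise. Then M·N = N·M = x^k · Id_k, where Id_k is the k×k identity matrix. -/
import Mathlib


open MvPolynomial

private lemma sum_if_eq {k : ℕ} (j : Fin k) (h : Fin k → MvPolynomial (Fin 2) ℂ) :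
    ∑ r : Fin k, (if (j : ℕ) = (r : ℕ) then h r else 0) = h j := by
  rw [Finset.sum_eq_single j]
  · simp
  · intro b _ hb
    rw [if_neg]
    exact fun hc => hb (Fin.ext hc.symm)
  · simp

private lemma sum_if_eq' {k : ℕ} (j : Fin k) (h : Fin k → MvPolynomial (Fin 2) ℂ) :
    ∑ r : Fin k, (if (r : ℕ) = (j : ℕ) then h r else 0) = h j := by
  rw [Finset.sum_eq_single j]
  · simp
  · intro b _ hb
    rw [if_neg]
    exact fun hc => hb (Fin.ext hc)
  · simp

private lemma sum_if_pred {k : ℕ} (j : Fin k) (h : Fin k → MvPolynomial (Fin 2) ℂ) :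
    ∑ r : Fin k, (if (j : ℕ) = (r : ℕ) + 1 then h r else 0) =
      if hj : 0 < (j : ℕ) then h ⟨(j : ℕ) - 1, by omega⟩ else 0 := by
  split_ifs with hj
  · rw [Finset.sum_eq_single (⟨(j : ℕ) - 1, by omega⟩ : Fin k)]
    · rw [if_pos (by simp; omega)]
    · intro b _ hb
      rw [if_neg]
      intro hc; apply hb; apply Fin.ext; simp; omega
    · simp
  · apply Finset.sum_eq_zero; intro r _; rw [if_neg]; omega

private lemma sum_if_succ {k : ℕ} (p : Fin k) (h : Fin k → MvPolynomial (Fin 2) ℂ) :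
    ∑ r : Fin k, (if (r : ℕ) = (p : ℕ) + 1 then h r else 0) =
      if hp : (p : ℕ) + 1 < k then h ⟨(p : ℕ) + 1, hp⟩ else 0 := by
  split_ifs with hp
  · rw [Finset.sum_eq_single (⟨(p : ℕ) + 1, hp⟩ : Fin k)]
    · rw [if_pos (by simp)]
    · intro b _ hb
      rw [if_neg]
      intro hc; apply hb; apply Fin.ext; simp; omega
    · simp
  · apply Finset.sum_eq_zero; intro r _; rw [if_neg]
    have := r.isLt; omega

/-- Let `k ≥ 1` and `0 = i_0 ≤ i_1 ≤ … ≤ i_{k−1}` (recorded as a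
function `c : ℕ → ℕ` with `c 0 = 0`, weakly increasing on `{0,…,k−1}`).  The `k×k`
matrices `M`, `N` over `ℂ[x,y]` with (`0`-based indices) `M p q = x^(k−1−(q−p)) y^(c q − c p)`
for `p ≤ q`, `0` otherwise, and `N p p = x`, `N p (p+1) = −y^(c (p+1) − c p)`, `0`
otherwise, satisfy `M·N = N·M = x^k · Id`. -/
theorem matrix_factorisation (k : ℕ) (hk : 1 ≤ k) (c : ℕ → ℕ) (hc0 : c 0 = 0)
    (hmono : ∀ a b : ℕ, a ≤ b → b ≤ k - 1 → c a ≤ c b)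
    (M N : Matrix (Fin k) (Fin k) (MvPolynomial (Fin 2) ℂ))
    (hM : ∀ p q : Fin k, M p q =
      if (p : ℕ) ≤ (q : ℕ) then
        (X 0 : MvPolynomial (Fin 2) ℂ) ^ (k - 1 - ((q : ℕ) - (p : ℕ))) *
          X 1 ^ (c q - c p)
      else 0)
    (hN : ∀ p q : Fin k, N p q =
      if (q : ℕ) = (p : ℕ) then (X 0 : MvPolynomial (Fin 2) ℂ)
      else if (q : ℕ) = (p : ℕ) + 1 then -((X 1 : MvPolynomial (Fin 2) ℂ) ^ (c q - c p))
      else 0) :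
    M * N = (X 0 : MvPolynomial (Fin 2) ℂ) ^ k •
        (1 : Matrix (Fin k) (Fin k) (MvPolynomial (Fin 2) ℂ)) ∧
    N * M = (X 0 : MvPolynomial (Fin 2) ℂ) ^ k •
        (1 : Matrix (Fin k) (Fin k) (MvPolynomial (Fin 2) ℂ)) := by
  constructor
  · rw [← Matrix.ext_iff]
    intro i j
    rw [Matrix.mul_apply]
    have hterm : ∀ r : Fin k, M i r * N r j =
        (if (j : ℕ) = (r : ℕ) then M i r * X 0 else 0) +
        (if (j : ℕ) = (r : ℕ) + 1 then
          M i r * (-((X 1 : MvPolynomial (Fin 2) ℂ) ^ (c (j : ℕ) - c (r : ℕ)))) else 0) := by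
      intro r
      rw [hN]
      by_cases h1 : (j : ℕ) = (r : ℕ)
      · simp only [if_pos h1, if_neg (show ¬(j : ℕ) = (r : ℕ) + 1 by omega), add_zero]
      · by_cases h2 : (j : ℕ) = (r : ℕ) + 1
        · simp only [if_neg h1, if_pos h2, zero_add]
        · simp only [if_neg h1, if_neg h2, mul_zero, add_zero]
    rw [Finset.sum_congr rfl (fun r _ => hterm r), Finset.sum_add_distrib,
        sum_if_eq, sum_if_pred]
    simp only [Matrix.smul_apply, Matrix.one_apply, smul_eq_mul, mul_ite, mul_one, mul_zero]
    rcases lt_trichotomy (i : ℕ) (j : ℕ) with h | h | h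
    · rw [dif_pos (by omega), if_neg (by exact fun he => by simp [Fin.ext_iff] at he; omega),
          hM, hM, if_pos (by omega), if_pos (by simp; omega)]
      simp only [Fin.val_mk]
      have hjk : (j : ℕ) < k := j.isLt
      have e1 : k - 1 - ((j : ℕ) - 1 - (i : ℕ)) = k - 1 - ((j : ℕ) - (i : ℕ)) + 1 := by omega
      have e2 : c (j : ℕ) - c (i : ℕ) =
          (c ((j : ℕ) - 1) - c (i : ℕ)) + (c (j : ℕ) - c ((j : ℕ) - 1)) := by
        have h1 := hmono (i : ℕ) ((j : ℕ) - 1) (by omega) (by omega)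
        have h2 := hmono ((j : ℕ) - 1) (j : ℕ) (by omega) (by omega)
        omega
      rw [e1, e2, pow_add, pow_add]
      ring
    · rw [if_pos (Fin.ext h), hM, if_pos (by omega)]
      have h0 : (j : ℕ) - (i : ℕ) = 0 := by omega
      have hcc : c (j : ℕ) - c (i : ℕ) = 0 := by rw [h]; omega
      rw [hcc, h0]
      have : (if hj : 0 < (j : ℕ) then
          M i ⟨(j : ℕ) - 1, by omega⟩ *
            (-((X 1 : MvPolynomial (Fin 2) ℂ) ^ (c (j : ℕ) - c ((⟨(j : ℕ) - 1, by omega⟩ : Fin k) : ℕ)))) else 0) = 0 := by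
        split_ifs with hj
        · rw [hM, if_neg (by simp; omega), zero_mul]
        · rfl
      rw [this, add_zero, pow_zero, mul_one, ← pow_succ]
      congr 1
      omega
    · rw [hM, if_neg (by omega), if_neg (by exact fun he => by simp [Fin.ext_iff] at he; omega),
          zero_mul, zero_add]
      split_ifs with hj
      · rw [hM, if_neg (by simp; omega), zero_mul]
      · rfl
  · rw [← Matrix.ext_iff]
    intro i j
    rw [Matrix.mul_apply]
    have hterm : ∀ r : Fin k, N i r * M r j =
        (if (r : ℕ) = (i : ℕ) then (X 0 : MvPolynomial (Fin 2) ℂ) * M r j else 0) +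
        (if (r : ℕ) = (i : ℕ) + 1 then
          (-((X 1 : MvPolynomial (Fin 2) ℂ) ^ (c (r : ℕ) - c (i : ℕ)))) * M r j else 0) := by
      intro r
      rw [hN]
      by_cases h1 : (r : ℕ) = (i : ℕ)
      · simp only [if_pos h1, if_neg (show ¬(r : ℕ) = (i : ℕ) + 1 by omega), add_zero]
      · by_cases h2 : (r : ℕ) = (i : ℕ) + 1
        · simp only [if_neg h1, if_pos h2, zero_add]
        · simp only [if_neg h1, if_neg h2, zero_mul, add_zero]
    rw [Finset.sum_congr rfl (fun r _ => hterm r), Finset.sum_add_distrib,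
        sum_if_eq', sum_if_succ]
    simp only [Matrix.smul_apply, Matrix.one_apply, smul_eq_mul, mul_ite, mul_one, mul_zero]
    rcases lt_trichotomy (i : ℕ) (j : ℕ) with h | h | h
    · have hik : (i : ℕ) + 1 < k := by have := j.isLt; omega
      rw [dif_pos hik, if_neg (by exact fun he => by simp [Fin.ext_iff] at he; omega),
          hM, hM, if_pos (by omega), if_pos (by simp; omega)]
      simp only [Fin.val_mk]
      have hjk : (j : ℕ) < k := j.isLt
      have e1 : k - 1 - ((j : ℕ) - ((i : ℕ) + 1)) = k - 1 - ((j : ℕ) - (i : ℕ)) + 1 := by omega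
      have e2 : c (j : ℕ) - c (i : ℕ) =
          (c ((i : ℕ) + 1) - c (i : ℕ)) + (c (j : ℕ) - c ((i : ℕ) + 1)) := by
        have h1 := hmono (i : ℕ) ((i : ℕ) + 1) (by omega) (by omega)
        have h2 := hmono ((i : ℕ) + 1) (j : ℕ) (by omega) (by omega)
        omega
      rw [e1, e2, pow_add, pow_add]
      ring
    · rw [if_pos (Fin.ext h), hM, if_pos (by omega)]
      have h0 : (j : ℕ) - (i : ℕ) = 0 := by omega
      have hcc : c (j : ℕ) - c (i : ℕ) = 0 := by rw [h]; omega
      rw [hcc, h0]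
      have : (if hp : (i : ℕ) + 1 < k then
          (-((X 1 : MvPolynomial (Fin 2) ℂ) ^ (c ((⟨(i : ℕ) + 1, hp⟩ : Fin k) : ℕ) - c (i : ℕ)))) *
            M ⟨(i : ℕ) + 1, hp⟩ j else 0) = 0 := by
        split_ifs with hp
        · rw [hM, if_neg (by simp; omega), mul_zero]
        · rfl
      rw [this, add_zero, pow_zero, mul_one, ← pow_succ']
      congr 1
      omega
    · rw [hM, if_neg (by omega), if_neg (by exact fun he => by simp [Fin.ext_iff] at he; omega),
          mul_zero, zero_add]
      split_ifs with hp
      · rw [hM, if_neg (by simp; omega), mul_zero]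
      · rfl
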